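/- Fix B ≥ 2 and elevations θ_1,…,θ_m ∈ [0,π]. For every choice of azimuths φ_1,…,φ_m ∈ [0,2π) for which all columns of the spherical-harmonic sensing matrix A ∈ ℂ^{m×B^2} are nonzero, and for all integers l ≠ r with 0 ≤ l, r ≤ B−1 and all integers k with |k| ≤ min(l,r), the mutual coherence satisfies μ(A) ≥ |Σ_{p=1}^m P_l^k(cos θ_p) P_r^k(cos θ_p)| / ((Σ_{p=1}^m P_l^k(cos θ_p)^2)^{1/2} · (Σ_{p=1}^m P_r^k(cos θ_p)^2)^{1/2}). -/

import Mathlib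

open scoped Real BigOperators

/-- Associated Legendre polynomial `P_l^k(x)` for integer order `k` (possibly negative). -/
noncomputable def assocLegendre (l : ℕ) (k : ℤ) (x : ℝ) : ℝ :=
  ((-1 : ℝ) ^ k / (2 ^ l * (Nat.factorial l : ℝ))) * (1 - x ^ 2) ^ ((k : ℝ) / 2) *
    iteratedDeriv (k + (l : ℤ)).toNat (fun y : ℝ => (y ^ 2 - 1) ^ l) x

/-- Normalization factor of spherical harmonics. -/
noncomputable def shNormFactor (l : ℕ) (k : ℤ) : ℝ :=
  Real.sqrt ((2 * (l : ℝ) + 1) / (4 * Real.pi) *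
    ((Nat.factorial ((l : ℤ) - k).toNat : ℝ) / (Nat.factorial ((l : ℤ) + k).toNat : ℝ)))

/-- Spherical harmonic `Y_l^k(θ,φ)`. -/
noncomputable def sphericalHarmonic (l : ℕ) (k : ℤ) (θ φ : ℝ) : ℂ :=
  ((shNormFactor l k * assocLegendre l k (Real.cos θ) : ℝ) : ℂ) *
    Complex.exp (Complex.I * (k : ℂ) * (φ : ℂ))

/-- Jacobi polynomial `P_α^{(ξ,λ)}(x)`. -/
noncomputable def jacobiP (a ξ lam : ℕ) (x : ℝ) : ℝ :=
  ((-1 : ℝ) ^ a / (2 ^ a * (Nat.factorial a : ℝ))) * (1 - x) ^ (-(ξ : ℤ)) *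
    (1 + x) ^ (-(lam : ℤ)) *
    iteratedDeriv a (fun y : ℝ => (1 - y) ^ ξ * (1 + y) ^ lam * (1 - y ^ 2) ^ a) x

/-- The coefficient `γ = α!(α+ξ+λ)!/((α+ξ)!(α+λ)!)`. -/
noncomputable def jacobiGamma (a ξ lam : ℕ) : ℝ :=
  ((Nat.factorial a : ℝ) * (Nat.factorial (a + ξ + lam) : ℝ)) /
    ((Nat.factorial (a + ξ) : ℝ) * (Nat.factorial (a + lam) : ℝ))

/-- Wigner d-function `d_l^{k,n}(cos θ)` (as a function of `θ`). -/
noncomputable def wignerd (l : ℕ) (k n : ℤ) (θ : ℝ) : ℝ :=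
  let ξ : ℕ := (k - n).natAbs
  let lam : ℕ := (k + n).natAbs
  let a : ℕ := l - (ξ + lam) / 2
  let ω : ℝ := if k ≤ n then 1 else (-1 : ℝ) ^ (n - k)
  ω * Real.sqrt (jacobiGamma a ξ lam) * (Real.sin (θ / 2)) ^ ξ * (Real.cos (θ / 2)) ^ lam *
    jacobiP a ξ lam (Real.cos θ)

/-- Wigner D-function `D_l^{k,n}(θ,φ,χ)`. -/
noncomputable def wignerD (l : ℕ) (k n : ℤ) (θ φ χ : ℝ) : ℂ :=
  ((Real.sqrt ((2 * (l : ℝ) + 1) / (8 * Real.pi ^ 2)) : ℝ) : ℂ) *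
    Complex.exp (-(Complex.I * (k : ℂ) * (φ : ℂ))) * ((wignerd l k n θ : ℝ) : ℂ) *
    Complex.exp (-(Complex.I * (n : ℂ) * (χ : ℂ)))

/-- Column index set for the spherical-harmonic sensing matrix: pairs `(l,k)`,
`0 ≤ l ≤ B-1`, `-l ≤ k ≤ l`.  It has `B^2` elements. -/
abbrev SHIndex (B : ℕ) := Σ l : Fin B, ↥(Set.Icc (-(l.1 : ℤ)) (l.1 : ℤ))

/-- Column index set for the Wigner-D sensing matrix: triples `(l,k,n)`,
`0 ≤ l ≤ B-1`, `-l ≤ k,n ≤ l`.  It has `B(2B-1)(2B+1)/3` elements. -/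
abbrev WDIndex (B : ℕ) :=
  Σ l : Fin B, ↥(Set.Icc (-(l.1 : ℤ)) (l.1 : ℤ)) × ↥(Set.Icc (-(l.1 : ℤ)) (l.1 : ℤ))

/-- The spherical-harmonic sensing matrix. -/
noncomputable def shMatrix {m : ℕ} (B : ℕ) (θ φ : Fin m → ℝ) :
    Matrix (Fin m) (SHIndex B) ℂ :=
  fun p i => sphericalHarmonic i.1.1 i.2.1 (θ p) (φ p)

/-- The Wigner-D sensing matrix. -/
noncomputable def wdMatrix {m : ℕ} (B : ℕ) (θ φ χ : Fin m → ℝ) :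
    Matrix (Fin m) (WDIndex B) ℂ :=
  fun p i => wignerD i.1.1 i.2.1.1 i.2.2.1 (θ p) (φ p) (χ p)

/-- Mutual coherence of a matrix: the supremum over pairs of distinct columns of the
normalized absolute inner product. -/
noncomputable def mutualCoherence {m : ℕ} {ι : Type*} (A : Matrix (Fin m) ι ℂ) : ℝ :=
  sSup {x : ℝ | ∃ i j : ι, i ≠ j ∧
    x = ‖∑ p, (starRingEnd ℂ) (A p i) * A p j‖ /
        (Real.sqrt (∑ p, Complex.normSq (A p i)) * Real.sqrt (∑ p, Complex.normSq (A p j)))}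

/-! The columns `(l,k)` and `(r,k)` carry the same azimuthal phase `e^{ikφ_p}` in row `p`, so it
cancels in their inner product, and the positive normalisations `N_l^k`, `N_r^k` cancel in the
quotient. What remains is the normalised correlation of the Legendre samples, which is one of
the values whose supremum is the coherence; by Cauchy–Schwarz these values are bounded by `1`,
so that `sSup` is not the junk value. -/

open Finset

noncomputable def columnCorrelation {κ ι : Type*} [Fintype κ] (A : Matrix κ ι ℂ) (i j : ι) : ℝ :=
  ‖∑ p, (starRingEnd ℂ) (A p i) * A p j‖ /
    (Real.sqrt (∑ p, Complex.normSq (A p i)) * Real.sqrt (∑ p, Complex.normSq (A p j)))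

lemma columnCorrelation_le_one {κ ι : Type*} [Fintype κ] (A : Matrix κ ι ℂ) (i j : ι) :
    columnCorrelation A i j ≤ 1 := by
  refine div_le_one_of_le₀ ?_ (by positivity)
  calc ‖∑ p, (starRingEnd ℂ) (A p i) * A p j‖
      ≤ ∑ p, ‖A p i‖ * ‖A p j‖ := (norm_sum_le _ _).trans_eq (by simp)
    _ ≤ Real.sqrt (∑ p, ‖A p i‖ ^ 2) * Real.sqrt (∑ p, ‖A p j‖ ^ 2) :=
      Real.sum_mul_le_sqrt_mul_sqrt _ _ _
    _ = Real.sqrt (∑ p, Complex.normSq (A p i)) * Real.sqrt (∑ p, Complex.normSq (A p j)) := by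
      simp only [Complex.sq_norm]

lemma columnCorrelation_le_mutualCoherence {m : ℕ} {ι : Type*} (A : Matrix (Fin m) ι ℂ)
    {i j : ι} (hij : i ≠ j) : columnCorrelation A i j ≤ mutualCoherence A :=
  le_csSup ⟨1, by rintro _ ⟨i, j, -, rfl⟩; exact columnCorrelation_le_one A i j⟩ ⟨i, j, hij, rfl⟩

lemma abs_sum_mul_div_sqrt_mul_sqrt_const_mul {κ : Type*} [Fintype κ] {a b : ℝ} (ha : 0 < a)
    (hb : 0 < b) (u v : κ → ℝ) :
    |∑ p, a * u p * (b * v p)| /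
        (Real.sqrt (∑ p, (a * u p) ^ 2) * Real.sqrt (∑ p, (b * v p) ^ 2)) =
      |∑ p, u p * v p| / (Real.sqrt (∑ p, u p ^ 2) * Real.sqrt (∑ p, v p ^ 2)) := by
  have hsum : ∑ p, a * u p * (b * v p) = a * b * ∑ p, u p * v p := by
    rw [mul_sum]; exact sum_congr rfl fun p _ => by ring
  have hsq (c : ℝ) (hc : 0 < c) (w : κ → ℝ) :
      Real.sqrt (∑ p, (c * w p) ^ 2) = c * Real.sqrt (∑ p, w p ^ 2) := by
    simp only [mul_pow, ← mul_sum, Real.sqrt_mul (sq_nonneg c), Real.sqrt_sq hc.le]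
  rw [hsum, hsq a ha, hsq b hb, abs_mul, abs_of_pos (mul_pos ha hb),
    mul_mul_mul_comm, mul_div_mul_left _ _ (mul_pos ha hb).ne']

lemma shNormFactor_pos (l : ℕ) (k : ℤ) : 0 < shNormFactor l k := by
  unfold shNormFactor
  have := Real.pi_pos
  positivity

lemma conj_sphericalHarmonic_mul_sphericalHarmonic (l r : ℕ) (k : ℤ) (θ φ : ℝ) :
    (starRingEnd ℂ) (sphericalHarmonic l k θ φ) * sphericalHarmonic r k θ φ =
      ((shNormFactor l k * assocLegendre l k (Real.cos θ) *
        (shNormFactor r k * assocLegendre r k (Real.cos θ)) : ℝ) : ℂ) := by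
  have hphase : (starRingEnd ℂ) (Complex.exp (Complex.I * k * φ)) *
      Complex.exp (Complex.I * k * φ) = 1 := by
    rw [← Complex.exp_conj, ← Complex.exp_add]
    simp [Complex.conj_ofReal]
  unfold sphericalHarmonic
  rw [map_mul, Complex.conj_ofReal, Complex.ofReal_mul _ (_ * _),
    mul_mul_mul_comm, hphase, mul_one]

lemma normSq_sphericalHarmonic (l : ℕ) (k : ℤ) (θ φ : ℝ) :
    Complex.normSq (sphericalHarmonic l k θ φ) =
      (shNormFactor l k * assocLegendre l k (Real.cos θ)) ^ 2 := by
  unfold sphericalHarmonic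
  rw [Complex.normSq_mul, Complex.normSq_ofReal, Complex.normSq_eq_norm_sq, Complex.norm_exp]
  simp [sq]

lemma columnCorrelation_shMatrix_same_order {B m : ℕ} (θ φ : Fin m → ℝ) {l r : Fin B} {k : ℤ}
    (hkl : k ∈ Set.Icc (-(l.1 : ℤ)) l) (hkr : k ∈ Set.Icc (-(r.1 : ℤ)) r) :
    columnCorrelation (shMatrix B θ φ) ⟨l, ⟨k, hkl⟩⟩ ⟨r, ⟨k, hkr⟩⟩ =
      |∑ p, assocLegendre l k (Real.cos (θ p)) * assocLegendre r k (Real.cos (θ p))| /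
        (Real.sqrt (∑ p, (assocLegendre l k (Real.cos (θ p))) ^ 2) *
          Real.sqrt (∑ p, (assocLegendre r k (Real.cos (θ p))) ^ 2)) := by
  simp only [columnCorrelation, shMatrix, conj_sphericalHarmonic_mul_sphericalHarmonic,
    normSq_sphericalHarmonic, ← Complex.ofReal_sum, Complex.norm_real, Real.norm_eq_abs]
  exact abs_sum_mul_div_sqrt_mul_sqrt_const_mul (shNormFactor_pos l k) (shNormFactor_pos r k) _ _

theorem shMatrix_coherence_lower_bound_general (B m : ℕ)
    (θ φ : Fin m → ℝ)
    (l r : ℕ) (hlr : l ≠ r) (hl : l ≤ B - 1) (hr : r ≤ B - 1)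
    (k : ℤ) (hk : k.natAbs ≤ min l r) :
    mutualCoherence (shMatrix B θ φ) ≥
      |∑ p, assocLegendre l k (Real.cos (θ p)) * assocLegendre r k (Real.cos (θ p))| /
        (Real.sqrt (∑ p, (assocLegendre l k (Real.cos (θ p))) ^ 2) *
          Real.sqrt (∑ p, (assocLegendre r k (Real.cos (θ p))) ^ 2)) := by
  -- `B - 1` truncates at `B = 0`, where `l = r = 0` would contradict `hlr`.
  have hlB : l < B := by omega
  have hrB : r < B := by omega
  have hkl : k ∈ Set.Icc (-(l : ℤ)) l := by constructor <;> omega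
  have hkr : k ∈ Set.Icc (-(r : ℤ)) r := by constructor <;> omega
  have hij : (⟨⟨l, hlB⟩, ⟨k, hkl⟩⟩ : SHIndex B) ≠ ⟨⟨r, hrB⟩, ⟨k, hkr⟩⟩ :=
    fun h => hlr (congrArg (fun x : SHIndex B => x.1.1) h)
  rw [ge_iff_le,
    ← columnCorrelation_shMatrix_same_order (l := ⟨l, hlB⟩) (r := ⟨r, hrB⟩) θ φ hkl hkr]
  exact columnCorrelation_le_mutualCoherence _ hij

/-- lower bound on the mutual coherence of the spherical-harmonic sensing matrix
in terms of the (fixed) elevation samples only. -/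
theorem shMatrix_coherence_lower_bound (B m : ℕ) (hB : 2 ≤ B)
    (θ φ : Fin m → ℝ)
    (hθ : ∀ p, θ p ∈ Set.Icc 0 Real.pi) (hφ : ∀ p, φ p ∈ Set.Ico 0 (2 * Real.pi))
    (hcols : ∀ i : SHIndex B, ∃ p, shMatrix B θ φ p i ≠ 0)
    (l r : ℕ) (hlr : l ≠ r) (hl : l ≤ B - 1) (hr : r ≤ B - 1)
    (k : ℤ) (hk : k.natAbs ≤ min l r) :
    mutualCoherence (shMatrix B θ φ) ≥
      |∑ p, assocLegendre l k (Real.cos (θ p)) * assocLegendre r k (Real.cos (θ p))| /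
        (Real.sqrt (∑ p, (assocLegendre l k (Real.cos (θ p))) ^ 2) *
          Real.sqrt (∑ p, (assocLegendre r k (Real.cos (θ p))) ^ 2)) :=
  shMatrix_coherence_lower_bound_general B m θ φ l r hlr hl hr k hk
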